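/- Let (A, B, C) be a recollement of abelian categories in which the functor r : C ⥤ B is exact. Then spli C ≤ spli B, where spli denotes the supremum of projective dimensions of injective objects. -/

import Mathlib

open CategoryTheory CategoryTheory.Limits

universe v₁ v₂ v₃ u₁ u₂ u₃

/-- A recollement of abelian categories `(A, B, C)`: adjoint triples `(q, i, p)` and
`(l, e, r)` with `i`, `l`, `r` fully faithful and the essential image of `i` equal to
the kernel of `e`. -/
structure AbRecollement (A : Type u₁) (B : Type u₂) (C : Type u₃)
    [Category.{v₁} A] [Category.{v₂} B] [Category.{v₃} C]
    [Abelian A] [Abelian B] [Abelian C] where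
  i : A ⥤ B
  e : B ⥤ C
  q : B ⥤ A
  p : B ⥤ A
  l : C ⥤ B
  r : C ⥤ B
  adj_qi : q ⊣ i
  adj_ip : i ⊣ p
  adj_le : l ⊣ e
  adj_er : e ⊣ r
  i_full : i.Full
  i_faithful : i.Faithful
  l_full : l.Full
  l_faithful : l.Faithful
  r_full : r.Full
  r_faithful : r.Faithful
  essImage_i_eq_ker_e : ∀ X : B, i.essImage X ↔ Limits.IsZero (e.obj X)

universe w v u

/-- `X` has projective dimension `≤ n`: `Extⁱ(X, -) = 0` for all `i > n`. -/
def projDimLE {A : Type u} [Category.{v} A] [Abelian A] [CategoryTheory.HasExt.{w} A]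
    (X : A) (n : ℕ) : Prop :=
  ∀ (Y : A) (i : ℕ), n < i → Subsingleton (CategoryTheory.Abelian.Ext X Y i)

/-- `X` has injective dimension `≤ n`: `Extⁱ(-, X) = 0` for all `i > n`. -/
def injDimLE {A : Type u} [Category.{v} A] [Abelian A] [CategoryTheory.HasExt.{w} A]
    (X : A) (n : ℕ) : Prop :=
  ∀ (Y : A) (i : ℕ), n < i → Subsingleton (CategoryTheory.Abelian.Ext Y X i)

/-- An abelian category (with enough projectives and injectives) is `n`-Gorenstein if
`spli A ≤ n` (every injective has projective dimension `≤ n`) and `silp A ≤ n`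
(every projective has injective dimension `≤ n`). -/
def IsNGorenstein (A : Type u) [Category.{v} A] [Abelian A] [CategoryTheory.HasExt.{w} A]
    (n : ℕ) : Prop :=
  (∀ I : A, CategoryTheory.Injective I → projDimLE.{w} I n) ∧
  (∀ P : A, CategoryTheory.Projective P → injDimLE.{w} P n)

/-!
The exact functor `r` is fully faithful and, as the right adjoint of the exact functor `e`,
preserves injectives. By dimension shifting along injective presentations such a functor induces
isomorphisms `Extⁱ_C(X, Y) ≅ Extⁱ_B(r X, r Y)`, so for an injective `J` of `C`, the vanishing
of `Extⁱ_B(r J, -)` for `i > n`, granted since `r J` is injective in `B`, forces that of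
`Extⁱ_C(J, -)`.
-/

universe w'

theorem CategoryTheory.Functor.projDimLE_of_projDimLE_obj {C : Type u₁} {D : Type u₂}
    [Category.{v₁} C] [Category.{v₂} D] [Abelian C] [Abelian D] [EnoughInjectives C]
    [HasExt.{w} C] [HasExt.{w'} D] (F : C ⥤ D) [F.Additive]
    [PreservesFiniteLimits F] [PreservesFiniteColimits F] [F.Full] [F.Faithful]
    [F.PreservesInjectiveObjects] {X : C} {n : ℕ} (hX : projDimLE.{w'} (F.obj X) n) :
    projDimLE.{w} X n := fun Y i hi =>
  have := hX (F.obj Y) i hi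
  (F.mapExt_bijective_of_preservesInjectiveObjects X Y i).injective.subsingleton

namespace AbRecollement

variable {A : Type u₁} {B : Type u₂} {C : Type u₃}
  [Category.{v₁} A] [Category.{v₂} B] [Category.{v₃} C]
  [Abelian A] [Abelian B] [Abelian C] (R : AbRecollement A B C)

theorem r_preservesInjectiveObjects : R.r.PreservesInjectiveObjects :=
  have := R.adj_le.rightAdjoint_preservesLimits
  Functor.preservesInjectiveObjects_of_adjunction_of_preservesMonomorphisms R.adj_er

end AbRecollement

theorem spli_le_of_r_exact_general
    {A : Type u₁} {B : Type u₂} {C : Type u₃}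
    [Category.{v₁} A] [Category.{v₂} B] [Category.{v₃} C]
    [Abelian A] [Abelian B] [Abelian C]
    [EnoughInjectives C]
    [CategoryTheory.HasExt.{w} B] [CategoryTheory.HasExt.{w} C]
    (R : AbRecollement A B C)
    [PreservesFiniteLimits R.r] [PreservesFiniteColimits R.r]
    (n : ℕ) (hB : ∀ I : B, Injective I → projDimLE.{w} I n) :
    ∀ J : C, Injective J → projDimLE.{w} J n := by
  have := R.r_full
  have := R.r_faithful
  have := R.r_preservesInjectiveObjects
  have : R.r.Additive := Functor.additive_of_preserves_binary_products _
  exact fun J hJ => R.r.projDimLE_of_projDimLE_obj (hB _ (R.r.injective_obj_of_injective hJ))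

/-- Let `(A, B, C)` be a recollement of abelian categories in which
`r : C ⥤ B` is exact.  Then `spli C ≤ spli B`: any bound `n` on the projective
dimensions of injectives of `B` is also a bound for the injectives of `C`. -/
theorem spli_le_of_r_exact
    {A : Type u₁} {B : Type u₂} {C : Type u₃}
    [Category.{v₁} A] [Category.{v₂} B] [Category.{v₃} C]
    [Abelian A] [Abelian B] [Abelian C]
    [EnoughProjectives B] [EnoughInjectives B]
    [EnoughProjectives C] [EnoughInjectives C]
    [CategoryTheory.HasExt.{w} B] [CategoryTheory.HasExt.{w} C]
    (R : AbRecollement A B C)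
    [PreservesFiniteLimits R.r] [PreservesFiniteColimits R.r]
    (n : ℕ) (hB : ∀ I : B, Injective I → projDimLE.{w} I n) :
    ∀ J : C, Injective J → projDimLE.{w} J n :=
  spli_le_of_r_exact_general R n hB
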